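/- arXiv:2312.07926 — 4 statements merged into one kernel-verified Lean document; each statement's English description precedes it below -/
import Mathlib

section
/- Let r ≥ 1 be an integer, α₁,…,α_r, a₁,…,a_r, b positive reals, β = α₁+⋯+α_r. Then the multiple series ∑_{n₁,…,n_r ≥ 0} C(n₁+α₁-1,n₁)⋯C(n_r+α_r-1,n_r) / (a₁n₁+⋯+a_r n_r+b)^s converges absolutely for every complex s with Re(s) > β. -/
/-- Generalized binomial coefficient C(γ, n) = γ(γ-1)⋯(γ-n+1)/n!. -/
noncomputable def genBinom (γ : ℝ) (n : ℕ) : ℝ :=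
  (∏ i ∈ Finset.range n, (γ - i)) / n.factorial

open Finset Real

private lemma telescope_prod (x : ℝ) (hx : 0 < x) (m : ℕ) :
    ∏ k ∈ Finset.range m, ((x + k + 1) / (x + k)) = (x + m) / x := by
  induction m with
  | zero => simp [div_self hx.ne']
  | succ m ih =>
    rw [Finset.prod_range_succ, ih]
    have h1 : x + (m : ℝ) ≠ 0 := by positivity
    have h2 : x ≠ 0 := hx.ne'
    push_cast
    field_simp
    ring

private lemma genBinom_eq (α : ℝ) (n : ℕ) :
    genBinom ((n : ℝ) + α - 1) n = ∏ i ∈ Finset.range n, (((i : ℝ) + α) / ((i : ℝ) + 1)) := by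
  unfold genBinom
  rw [Finset.prod_div_distrib]
  congr 1
  · calc ∏ i ∈ Finset.range n, ((n : ℝ) + α - 1 - (i : ℕ))
        = ∏ i ∈ Finset.range n, (((n - 1 - i : ℕ) : ℝ) + α) := by
          refine Finset.prod_congr rfl fun i hi => ?_
          rw [Finset.mem_range] at hi
          have h1 : i ≤ n - 1 := by omega
          have h2 : 1 ≤ n := by omega
          rw [Nat.cast_sub h1, Nat.cast_sub h2]
          push_cast
          ring
      _ = ∏ i ∈ Finset.range n, ((i : ℝ) + α) :=
          Finset.prod_range_reflect (fun i => (i : ℝ) + α) n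
  · rw [← Finset.prod_range_add_one_eq_factorial, Nat.cast_prod]
    push_cast
    rfl

private lemma genBinom_nonneg (α : ℝ) (hα : 0 < α) (n : ℕ) :
    0 ≤ genBinom ((n : ℝ) + α - 1) n := by
  rw [genBinom_eq]
  exact Finset.prod_nonneg fun i _ => by positivity

private lemma factor_le (θ : ℝ) (hθ : 0 < θ) (hθ1 : θ ≤ 1) (i : ℕ) :
    ((i : ℝ) + θ) / ((i : ℝ) + 1) ≤ (((i : ℝ) + 1 + 1) / ((i : ℝ) + 1)) ^ (θ - 1) := by
  have hx0 : (0:ℝ) < (i : ℝ) + 1 := by positivity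
  have hB : (((i : ℝ) + 1 + 1) / ((i : ℝ) + 1)) ^ (1 - θ)
      ≤ 1 + (1 - θ) * (1 / ((i : ℝ) + 1)) := by
    have h : ((i : ℝ) + 1 + 1) / ((i : ℝ) + 1) = 1 + 1 / ((i : ℝ) + 1) := by
      field_simp
    rw [h]
    have hge : (-1 : ℝ) ≤ 1 / ((i : ℝ) + 1) :=
      (neg_one_lt_zero.trans_le (by positivity : (0:ℝ) ≤ 1 / ((i : ℝ) + 1))).le
    exact rpow_one_add_le_one_add_mul_self hge (by linarith) (by linarith)
  have hBpos : (0:ℝ) < (((i : ℝ) + 1 + 1) / ((i : ℝ) + 1)) ^ (1 - θ) := by positivity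
  have hA0 : (0:ℝ) ≤ ((i : ℝ) + θ) / ((i : ℝ) + 1) := by positivity
  have hpow : (((i : ℝ) + 1 + 1) / ((i : ℝ) + 1)) ^ (θ - 1)
      = ((((i : ℝ) + 1 + 1) / ((i : ℝ) + 1)) ^ (1 - θ))⁻¹ := by
    rw [← Real.rpow_neg (by positivity), neg_sub]
  rw [hpow, ← one_div, le_div_iff₀ hBpos]
  calc ((i : ℝ) + θ) / ((i : ℝ) + 1) * (((i : ℝ) + 1 + 1) / ((i : ℝ) + 1)) ^ (1 - θ)
      ≤ ((i : ℝ) + θ) / ((i : ℝ) + 1) * (1 + (1 - θ) * (1 / ((i : ℝ) + 1))) :=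
        mul_le_mul_of_nonneg_left hB hA0
    _ ≤ 1 := by
        rw [div_mul_eq_mul_div, div_le_one hx0]
        have key : ((i : ℝ) + θ) * (1 + (1 - θ) * (1 / ((i : ℝ) + 1)))
            = (((i : ℝ) + θ) * (((i : ℝ) + 1) + (1 - θ))) / ((i : ℝ) + 1) := by
          field_simp
        rw [key, div_le_iff₀ hx0]
        nlinarith [sq_nonneg (1 - θ)]

private lemma prodB_le (θ : ℝ) (hθ : 0 < θ) (hθ1 : θ ≤ 1) (n : ℕ) :
    ∏ i ∈ Finset.range n, (((i : ℝ) + θ) / ((i : ℝ) + 1)) ≤ ((n : ℝ) + 1) ^ (θ - 1) := by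
  calc ∏ i ∈ Finset.range n, (((i : ℝ) + θ) / ((i : ℝ) + 1))
      ≤ ∏ i ∈ Finset.range n, ((((i : ℝ) + 1 + 1) / ((i : ℝ) + 1)) ^ (θ - 1)) :=
        Finset.prod_le_prod (fun i _ => by positivity) (fun i _ => factor_le θ hθ hθ1 i)
    _ = (∏ i ∈ Finset.range n, (((i : ℝ) + 1 + 1) / ((i : ℝ) + 1))) ^ (θ - 1) :=
        Real.finset_prod_rpow _ _ (fun i _ => by positivity) _
    _ = ((n : ℝ) + 1) ^ (θ - 1) := by
        congr 1
        calc ∏ i ∈ Finset.range n, (((i : ℝ) + 1 + 1) / ((i : ℝ) + 1))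
            = ∏ i ∈ Finset.range n, ((1 + (i : ℝ) + 1) / (1 + (i : ℝ))) := by
              refine Finset.prod_congr rfl fun i _ => ?_
              ring_nf
          _ = (1 + (n : ℝ)) / 1 := telescope_prod 1 one_pos n
          _ = (n : ℝ) + 1 := by ring

private lemma prodA_eq (θ : ℝ) (hθ : 0 < θ) (m n : ℕ) :
    ∏ i ∈ Finset.range n, (((i : ℝ) + θ + m) / ((i : ℝ) + θ)) =
      ∏ k ∈ Finset.range m, ((θ + (k : ℝ) + n) / (θ + k)) := by
  calc ∏ i ∈ Finset.range n, (((i : ℝ) + θ + m) / ((i : ℝ) + θ))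
      = ∏ i ∈ Finset.range n, ∏ k ∈ Finset.range m,
          ((((i : ℝ) + θ) + k + 1) / (((i : ℝ) + θ) + k)) :=
        Finset.prod_congr rfl fun i _ => (telescope_prod ((i : ℝ) + θ) (by positivity) m).symm
    _ = ∏ k ∈ Finset.range m, ∏ i ∈ Finset.range n,
          ((((i : ℝ) + θ) + k + 1) / (((i : ℝ) + θ) + k)) := Finset.prod_comm
    _ = ∏ k ∈ Finset.range m, ((θ + (k : ℝ) + n) / (θ + k)) := by
        refine Finset.prod_congr rfl fun k _ => ?_
        rw [← telescope_prod (θ + (k : ℝ)) (by positivity) n]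
        refine Finset.prod_congr rfl fun i _ => ?_
        ring_nf

private lemma genBinom_bound (α : ℝ) (hα : 0 < α) :
    ∃ C : ℝ, 0 < C ∧ ∀ n : ℕ,
      genBinom ((n : ℝ) + α - 1) n ≤ C * ((n : ℝ) + 1) ^ (α - 1) := by
  obtain ⟨m, θ, hθ0, hθ1, hmθ⟩ : ∃ (m : ℕ) (θ : ℝ), 0 < θ ∧ θ ≤ 1 ∧ α = m + θ := by
    have h1 : 1 ≤ ⌈α⌉₊ := Nat.one_le_ceil_iff.mpr hα
    have h2 : (⌈α⌉₊ : ℝ) < α + 1 := Nat.ceil_lt_add_one hα.le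
    have h3 : α ≤ (⌈α⌉₊ : ℝ) := Nat.le_ceil α
    have hc : ((⌈α⌉₊ - 1 : ℕ) : ℝ) = (⌈α⌉₊ : ℝ) - 1 := by
      rw [Nat.cast_sub h1]; simp
    exact ⟨⌈α⌉₊ - 1, α - ((⌈α⌉₊ - 1 : ℕ) : ℝ), by rw [hc]; linarith,
      by rw [hc]; linarith, by ring⟩
  refine ⟨(((m : ℝ) + 1) / θ) ^ m, by positivity, fun n => ?_⟩
  rw [genBinom_eq]
  have hsplit : ∀ i : ℕ, ((i : ℝ) + α) / ((i : ℝ) + 1)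
      = (((i : ℝ) + θ + m) / ((i : ℝ) + θ)) * (((i : ℝ) + θ) / ((i : ℝ) + 1)) := by
    intro i
    have h1 : (i : ℝ) + θ ≠ 0 := by positivity
    have h2 : (i : ℝ) + 1 ≠ 0 := by positivity
    rw [hmθ]
    field_simp
    ring
  have hApos : (0:ℝ) ≤ ∏ i ∈ Finset.range n, (((i : ℝ) + θ + m) / ((i : ℝ) + θ)) :=
    Finset.prod_nonneg fun i _ => by positivity
  have hA : ∏ i ∈ Finset.range n, (((i : ℝ) + θ + m) / ((i : ℝ) + θ))
      ≤ (((m : ℝ) + 1) / θ) ^ m * ((n : ℝ) + 1) ^ m := by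
    rw [prodA_eq θ hθ0 m n, ← mul_pow]
    calc ∏ k ∈ Finset.range m, ((θ + (k : ℝ) + n) / (θ + k))
        ≤ ∏ k ∈ Finset.range m, (((m : ℝ) + 1) / θ * ((n : ℝ) + 1)) := by
          refine Finset.prod_le_prod (fun k _ => by positivity) (fun k hk => ?_)
          rw [Finset.mem_range] at hk
          have hk' : (k : ℝ) + 1 ≤ (m : ℝ) := by exact_mod_cast hk
          rw [div_mul_eq_mul_div]
          refine div_le_div₀ (by positivity) ?_ hθ0 (by linarith)
          have hn0 : (0:ℝ) ≤ n := Nat.cast_nonneg n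
          nlinarith
      _ = (((m : ℝ) + 1) / θ * ((n : ℝ) + 1)) ^ m := by
          rw [Finset.prod_const, Finset.card_range]
  calc ∏ i ∈ Finset.range n, (((i : ℝ) + α) / ((i : ℝ) + 1))
      = (∏ i ∈ Finset.range n, (((i : ℝ) + θ + m) / ((i : ℝ) + θ))) *
          ∏ i ∈ Finset.range n, (((i : ℝ) + θ) / ((i : ℝ) + 1)) := by
        rw [← Finset.prod_mul_distrib]
        exact Finset.prod_congr rfl fun i _ => hsplit i
    _ ≤ ((((m : ℝ) + 1) / θ) ^ m * ((n : ℝ) + 1) ^ m) * ((n : ℝ) + 1) ^ (θ - 1) := by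
        refine mul_le_mul hA (prodB_le θ hθ0 hθ1 n)
          (Finset.prod_nonneg fun i _ => by positivity) (by positivity)
    _ = (((m : ℝ) + 1) / θ) ^ m * ((n : ℝ) + 1) ^ (α - 1) := by
        rw [mul_assoc]
        congr 1
        rw [← Real.rpow_natCast ((n : ℝ) + 1) m, ← Real.rpow_add (by positivity)]
        congr 1
        rw [hmθ]
        ring

private lemma summable_pi_prod : ∀ (r : ℕ) (f : Fin r → ℕ → ℝ),
    (∀ j n, 0 ≤ f j n) → (∀ j, Summable (f j)) →
    Summable (fun n : Fin r → ℕ => ∏ j, f j (n j)) := by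
  intro r
  induction r with
  | zero =>
    intro f h0 hf
    haveI : Unique (Fin 0 → ℕ) := ⟨⟨fun i => i.elim0⟩, fun n => funext fun i => i.elim0⟩
    simp only [Finset.univ_eq_empty, Finset.prod_empty]
    exact summable_of_finite_support (Set.toFinite _)
  | succ r ih =>
    intro f h0 hf
    have h := (hf 0).mul_of_nonneg
      (ih (fun j => f j.succ) (fun j n => h0 _ _) (fun j => hf _))
      (fun n => h0 0 n) (fun p => Finset.prod_nonneg fun j _ => h0 _ _)
    rw [← (Fin.consEquiv fun _ : Fin (r + 1) => ℕ).summable_iff]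
    refine h.congr fun p => ?_
    simp [Fin.consEquiv, Fin.prod_univ_succ]

/-- Absolute convergence of the multiple hyperbolic sinh-moment series for Re(s) > β. -/
theorem multiple_series_abs_convergence (r : ℕ) (hr : 1 ≤ r)
    (α a : Fin r → ℝ) (hα : ∀ j, 0 < α j) (ha : ∀ j, 0 < a j)
    (b : ℝ) (hb : 0 < b) (s : ℂ) (hs : (∑ j, α j) < s.re) :
    Summable (fun n : Fin r → ℕ =>
      ‖((∏ j, genBinom ((n j : ℝ) + α j - 1) (n j) : ℝ) : ℂ) /
        (((∑ j, a j * n j) + b : ℝ) : ℂ) ^ s‖) := by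
  classical
  set σ := s.re with hσdef
  set β := ∑ j, α j with hβdef
  have hβpos : 0 < β := Finset.sum_pos (fun j _ => hα j) ⟨⟨0, hr⟩, Finset.mem_univ _⟩
  have hσpos : 0 < σ := hβpos.trans hs
  have hrpos : (0:ℝ) < r := by exact_mod_cast hr
  set ε := (σ - β) / r with hεdef
  have hεpos : 0 < ε := div_pos (by linarith) hrpos
  choose C hCpos hC using fun j => genBinom_bound (α j) (hα j)
  set w : Fin r → ℝ := fun j => (α j + ε) / σ with hwdef
  have hw0 : ∀ j, 0 < w j := fun j => div_pos (by have := hα j; linarith) hσpos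
  have hsum' : ∑ j, (α j + ε) = σ := by
    rw [Finset.sum_add_distrib, Finset.sum_const, Finset.card_univ, Fintype.card_fin,
      nsmul_eq_mul, ← hβdef]
    have hre : (r : ℝ) * ε = σ - β := by
      rw [hεdef]; field_simp
    linarith
  have hwsum : ∑ j, w j = 1 := by
    simp only [hwdef]
    rw [← Finset.sum_div, hsum', div_self hσpos.ne']
  set K := max (∑ j, w j / a j) (1 / b) with hKdef
  have hKpos : 0 < K := lt_max_of_lt_right (by positivity)
  set CC := (∏ j, C j) * K ^ σ with hCCdef
  have hCCpos : 0 < CC := by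
    refine mul_pos (Finset.prod_pos fun j _ => hCpos j) (Real.rpow_pos_of_pos hKpos σ)
  -- summable majorant
  have hmaj : Summable (fun n : Fin r → ℕ => CC * ∏ j, ((n j : ℝ) + 1) ^ (-(1 + ε))) := by
    refine Summable.mul_left CC ?_
    refine summable_pi_prod r (fun j n => ((n : ℝ) + 1) ^ (-(1 + ε)))
      (fun j n => by positivity) (fun j => ?_)
    have h1 : Summable (fun n : ℕ => ((n : ℝ)) ^ (-(1 + ε))) :=
      Real.summable_nat_rpow.2 (by linarith)
    have h2 := (summable_nat_add_iff 1).2 h1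
    refine h2.congr fun n => ?_
    push_cast
    rfl
  refine Summable.of_nonneg_of_le (fun n => norm_nonneg _) (fun n => ?_) hmaj
  -- pointwise bound
  set D := (∑ j, a j * (n j : ℝ)) + b with hDdef
  have hD : 0 < D :=
    add_pos_of_nonneg_of_pos
      (Finset.sum_nonneg fun j _ => mul_nonneg (ha j).le (Nat.cast_nonneg _)) hb
  set x := ∏ j, genBinom ((n j : ℝ) + α j - 1) (n j) with hxdef
  have hx0 : 0 ≤ x := Finset.prod_nonneg fun j _ => genBinom_nonneg (α j) (hα j) (n j)
  have hnorm : ‖((x : ℝ) : ℂ) / ((D : ℝ) : ℂ) ^ s‖ = x / D ^ σ := by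
    rw [norm_div, Complex.norm_real,
      Complex.norm_cpow_eq_rpow_re_of_pos hD, Real.norm_of_nonneg hx0]
  rw [hnorm]
  -- numerator bound
  have hxle : x ≤ (∏ j, C j) * ∏ j, ((n j : ℝ) + 1) ^ (α j - 1) := by
    rw [← Finset.prod_mul_distrib]
    exact Finset.prod_le_prod (fun j _ => genBinom_nonneg (α j) (hα j) (n j))
      (fun j _ => hC j (n j))
  -- denominator bound via AM-GM
  have hgm : ∏ j, ((n j : ℝ) + 1) ^ (w j) ≤ ∑ j, w j * ((n j : ℝ) + 1) :=
    Real.geom_mean_le_arith_mean_weighted Finset.univ w (fun j => (n j : ℝ) + 1)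
      (fun j _ => (hw0 j).le) hwsum (fun j _ => by positivity)
  have h2 : ∑ j, w j * ((n j : ℝ) + 1) ≤ K * D := by
    have hsum1 : ∑ j, w j * ((n j : ℝ) + 1) = (∑ j, w j * (n j : ℝ)) + 1 := by
      have hh : ∑ j, w j * ((n j : ℝ) + 1) = (∑ j, w j * (n j : ℝ)) + ∑ j, w j := by
        rw [← Finset.sum_add_distrib]
        exact Finset.sum_congr rfl fun j _ => by ring
      rw [hh, hwsum]
    rw [hsum1, hDdef, mul_add]
    refine add_le_add ?_ ?_
    · rw [Finset.mul_sum]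
      refine Finset.sum_le_sum fun j _ => ?_
      have h1 : w j / a j ≤ K :=
        le_trans (Finset.single_le_sum (f := fun j => w j / a j)
          (fun j _ => div_nonneg (hw0 j).le (ha j).le) (Finset.mem_univ j)) (le_max_left _ _)
      calc w j * (n j : ℝ) = (w j / a j) * (a j * (n j : ℝ)) := by
            simp only [hwdef]
            field_simp [hσpos.ne', (ha j).ne', hrpos.ne']
        _ ≤ K * (a j * (n j : ℝ)) :=
            mul_le_mul_of_nonneg_right h1 (mul_nonneg (ha j).le (Nat.cast_nonneg _))
    · have h1 : 1 / b ≤ K := le_max_right _ _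
      rw [div_le_iff₀ hb] at h1
      linarith
  have h3 : ∏ j, ((n j : ℝ) + 1) ^ (α j + ε) ≤ K ^ σ * D ^ σ := by
    have heq : ∏ j, ((n j : ℝ) + 1) ^ (α j + ε)
        = (∏ j, ((n j : ℝ) + 1) ^ (w j)) ^ σ := by
      rw [← Real.finset_prod_rpow _ _ (fun j _ => by positivity) σ]
      refine Finset.prod_congr rfl fun j _ => ?_
      rw [← Real.rpow_mul (by positivity)]
      congr 1
      show α j + ε = (α j + ε) / σ * σ
      rw [div_mul_cancel₀ _ hσpos.ne']
    rw [heq, ← Real.mul_rpow hKpos.le hD.le]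
    exact Real.rpow_le_rpow (Finset.prod_nonneg fun j _ => by positivity)
      (hgm.trans h2) hσpos.le
  set P := ∏ j, ((n j : ℝ) + 1) ^ (α j + ε) with hPdef
  have hPpos : 0 < P := Finset.prod_pos fun j _ => by positivity
  have hDσ : 0 < D ^ σ := Real.rpow_pos_of_pos hD σ
  have hinv : (D ^ σ)⁻¹ ≤ K ^ σ * P⁻¹ := by
    rw [show K ^ σ * P⁻¹ = K ^ σ / P from (div_eq_mul_inv _ _).symm,
      le_div_iff₀ hPpos, inv_mul_eq_div, div_le_iff₀ hDσ]
    exact h3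
  have hfinal : x / D ^ σ
      ≤ ((∏ j, C j) * ∏ j, ((n j : ℝ) + 1) ^ (α j - 1)) * (K ^ σ * P⁻¹) := by
    rw [div_eq_mul_inv]
    refine mul_le_mul hxle hinv (by positivity) ?_
    exact mul_nonneg (Finset.prod_nonneg fun j _ => hCpos j |>.le)
      (Finset.prod_nonneg fun j _ => by positivity)
  refine hfinal.trans (le_of_eq ?_)
  rw [hCCdef, hPdef]
  rw [← Finset.prod_inv_distrib]
  have hPinv : ∏ j, (((n j : ℝ) + 1) ^ (α j + ε))⁻¹
      = ∏ j, ((n j : ℝ) + 1) ^ (-(α j + ε)) :=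
    Finset.prod_congr rfl fun j _ => (Real.rpow_neg (by positivity) _).symm
  rw [hPinv]
  have hcomb : (∏ j, ((n j : ℝ) + 1) ^ (α j - 1)) * ∏ j, ((n j : ℝ) + 1) ^ (-(α j + ε))
      = ∏ j, ((n j : ℝ) + 1) ^ (-(1 + ε)) := by
    rw [← Finset.prod_mul_distrib]
    refine Finset.prod_congr rfl fun j _ => ?_
    rw [← Real.rpow_add (by positivity)]
    congr 1
    ring
  calc (∏ j, C j) * (∏ j, ((n j : ℝ) + 1) ^ (α j - 1)) * (K ^ σ * ∏ j, ((n j : ℝ) + 1) ^ (-(α j + ε)))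
      = (∏ j, C j) * K ^ σ * ((∏ j, ((n j : ℝ) + 1) ^ (α j - 1)) * ∏ j, ((n j : ℝ) + 1) ^ (-(α j + ε))) := by
        ring
    _ = (∏ j, C j) * K ^ σ * ∏ j, ((n j : ℝ) + 1) ^ (-(1 + ε)) := by rw [hcomb]
end

section
/- Let X be a real random variable with finite moments of all orders, and let c be a nonzero real number. Then the function h(s) = E[(c+iX)^{-s}], defined via the principal branch (c+ix)^s = exp(s·Log(c+ix)), is an entire function of s ∈ ℂ. -/
open MeasureTheory Complex

private lemma integrable_poly_aux {Ω : Type*} [MeasurableSpace Ω]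
    (μ : Measure Ω) [IsProbabilityMeasure μ]
    (X : Ω → ℝ) (hX : Measurable X)
    (hmom : ∀ n : ℕ, Integrable (fun ω => |X ω| ^ n) μ)
    (a : ℝ) (n : ℕ) :
    Integrable (fun ω => (a + |X ω|) ^ n) μ := by
  have hmeas : AEStronglyMeasurable (fun ω => (a + |X ω|) ^ n) μ :=
    ((measurable_const.add hX.abs).pow_const n).aestronglyMeasurable
  have hint : Integrable (fun ω => 2 ^ n * (|a| ^ n + |X ω| ^ n)) μ :=
    ((integrable_const (|a| ^ n)).add (hmom n)).const_mul _
  refine hint.mono' hmeas ?_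
  filter_upwards with ω
  set u : ℝ := |X ω| with hudef
  have hu0 : (0:ℝ) ≤ u := abs_nonneg _
  rw [Real.norm_eq_abs, _root_.abs_pow]
  have h1 : |a + u| ≤ 2 * max |a| u := by
    calc |a + u| ≤ |a| + u := by
          refine (abs_add_le _ _).trans ?_
          simp [hudef]
      _ ≤ 2 * max |a| u := by
          have := le_max_left |a| u
          have := le_max_right |a| u
          nlinarith [abs_nonneg a]
  calc |a + u| ^ n ≤ (2 * max |a| u) ^ n :=
        pow_le_pow_left₀ (abs_nonneg _) h1 n
    _ = 2 ^ n * (max |a| u) ^ n := mul_pow 2 _ n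
    _ ≤ 2 ^ n * (|a| ^ n + u ^ n) := by
        gcongr
        rcases max_cases |a| u with ⟨h, _⟩ | ⟨h, _⟩ <;> rw [h]
        · nlinarith [pow_nonneg hu0 n]
        · nlinarith [pow_nonneg (abs_nonneg a) n]

/-- The moment function h(s) = E[(c+iX)^{-s}] of a random variable with all moments
finite is entire, for nonzero real c. -/
theorem moment_function_entire {Ω : Type*} [MeasurableSpace Ω]
    (μ : Measure Ω) [IsProbabilityMeasure μ]
    (X : Ω → ℝ) (hX : Measurable X)
    (hmom : ∀ n : ℕ, Integrable (fun ω => |X ω| ^ n) μ)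
    (c : ℝ) (hc : c ≠ 0) :
    Differentiable ℂ (fun s : ℂ => ∫ ω, ((c : ℂ) + X ω * I) ^ (-s) ∂μ) := by
  intro s₀
  -- basic facts about z ω = c + i X ω
  set z : Ω → ℂ := fun ω => (c : ℂ) + X ω * I with hzdef
  have hzre : ∀ ω, (z ω).re = c := by intro ω; simp [hzdef]
  have hzim : ∀ ω, (z ω).im = X ω := by intro ω; simp [hzdef]
  have hz0 : ∀ ω, z ω ≠ 0 := by
    intro ω h
    apply hc
    have := hzre ω
    rw [h] at this
    simpa using this.symm
  have hc0 : (0:ℝ) < |c| := abs_pos.2 hc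
  have hzlb : ∀ ω, |c| ≤ ‖z ω‖ := by
    intro ω
    have := Complex.abs_re_le_norm (z ω)
    rwa [hzre ω] at this
  have hzpos : ∀ ω, (0:ℝ) < ‖z ω‖ := fun ω => lt_of_lt_of_le hc0 (hzlb ω)
  have hzub : ∀ ω, ‖z ω‖ ≤ |c| + |X ω| := by
    intro ω
    have := Complex.norm_le_abs_re_add_abs_im (z ω)
    rwa [hzre ω, hzim ω] at this
  -- constants
  set R : ℝ := ‖s₀‖ + 1 with hRdef
  have hR0 : (0:ℝ) ≤ R := by positivity
  set n : ℕ := ⌈R⌉₊ with hndef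
  have hRn : R ≤ (n : ℝ) := Nat.le_ceil R
  set m : ℝ := min |c| 1 with hmdef
  have hm0 : (0:ℝ) < m := lt_min hc0 one_pos
  have hmz : ∀ ω, m ≤ ‖z ω‖ := fun ω => (min_le_left _ _).trans (hzlb ω)
  set K : ℝ := (m⁻¹) ^ n with hKdef
  have hK0 : (0:ℝ) < K := pow_pos (inv_pos.2 hm0) n
  set A : ℝ := |c| + |c|⁻¹ + Real.pi + m⁻¹ + 1 with hAdef
  have hA1 : (1:ℝ) ≤ A := by
    have : (0:ℝ) < m⁻¹ := inv_pos.2 hm0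
    have hpi : (0:ℝ) < Real.pi := Real.pi_pos
    have : (0:ℝ) < |c|⁻¹ := inv_pos.2 hc0
    simp only [hAdef]
    nlinarith
  have hA0 : (0:ℝ) ≤ A := le_trans zero_le_one hA1
  -- bound on rpow: for |t| ≤ R, |z ω| ^ t ≤ (|c| + |X ω|)^n + K
  have key_rpow : ∀ ω, ∀ t : ℝ, |t| ≤ R →
      ‖z ω‖ ^ t ≤ (|c| + |X ω|) ^ n + K := by
    intro ω t ht
    set r := ‖z ω‖ with hrdef
    have hr0 : 0 < r := hzpos ω
    have htn : t ≤ (n : ℝ) := le_trans (le_trans (le_abs_self t) ht) hRn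
    have htn' : -(n : ℝ) ≤ t := by
      have := (abs_le.mp ht).1
      linarith [hRn]
    rcases le_total 1 r with h1r | hr1
    · have h1 : r ^ t ≤ r ^ (n : ℝ) := Real.rpow_le_rpow_of_exponent_le h1r htn
      have h2 : r ^ (n : ℝ) = r ^ n := Real.rpow_natCast r n
      have h3 : r ^ n ≤ (|c| + |X ω|) ^ n :=
        pow_le_pow_left₀ (le_of_lt hr0) (hzub ω) n
      calc r ^ t ≤ r ^ n := by rw [← h2]; exact h1
        _ ≤ (|c| + |X ω|) ^ n := h3
        _ ≤ (|c| + |X ω|) ^ n + K := by linarith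
    · have h1 : r ^ t ≤ r ^ (-(n:ℝ)) := Real.rpow_le_rpow_of_exponent_ge hr0 hr1 htn'
      have h2 : r ^ (-(n:ℝ)) = (r ^ n)⁻¹ := by
        rw [Real.rpow_neg (le_of_lt hr0), Real.rpow_natCast]
      have h3 : (r ^ n)⁻¹ ≤ K := by
        rw [hKdef, ← inv_pow]
        refine pow_le_pow_left₀ (by positivity) ?_ n
        exact inv_anti₀ hm0 (hmz ω)
      have h4 : (0:ℝ) ≤ (|c| + |X ω|) ^ n := by positivity
      calc r ^ t ≤ (r ^ n)⁻¹ := by rw [← h2]; exact h1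
        _ ≤ K := h3
        _ ≤ (|c| + |X ω|) ^ n + K := by linarith
  -- bound on |Log z|
  have key_log : ∀ ω, ‖Complex.log (z ω)‖ ≤ |c| + |X ω| + |c|⁻¹ + Real.pi := by
    intro ω
    have h1 : ‖Complex.log (z ω)‖ ≤
        |Real.log (‖z ω‖)| + |Complex.arg (z ω)| := by
      have := Complex.norm_le_abs_re_add_abs_im (Complex.log (z ω))
      rwa [Complex.log_re, Complex.log_im] at this
    have harg := Complex.abs_arg_le_pi (z ω)
    have hlog : |Real.log (‖z ω‖)| ≤ |c| + |X ω| + |c|⁻¹ := by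
      rw [abs_le]
      constructor
      · have h2 : -Real.log (‖z ω‖) = Real.log (‖z ω‖)⁻¹ := by
          rw [Real.log_inv]
        have h3 : Real.log (‖z ω‖)⁻¹ ≤ (‖z ω‖)⁻¹ :=
          Real.log_le_self (by positivity)
        have h4 : (‖z ω‖)⁻¹ ≤ |c|⁻¹ := inv_anti₀ hc0 (hzlb ω)
        have h5 : (0:ℝ) ≤ |X ω| := abs_nonneg _
        nlinarith [hc0]
      · have h3 : Real.log (‖z ω‖) ≤ ‖z ω‖ :=
          Real.log_le_self (le_of_lt (hzpos ω))
        have := hzub ω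
        have : (0:ℝ) < |c|⁻¹ := inv_pos.2 hc0
        linarith [hzub ω]
    linarith
  -- cpow norm bound for s in the ball
  have key_cpow : ∀ ω, ∀ s : ℂ, s ∈ Metric.ball s₀ 1 →
      ‖z ω ^ (-s)‖ ≤ ((|c| + |X ω|) ^ n + K) * Real.exp (Real.pi * R) := by
    intro ω s hs
    have hsabs : ‖s‖ ≤ R := by
      have hd : ‖s - s₀‖ < 1 := by
        simpa [Complex.dist_eq] using Metric.mem_ball.mp hs
      calc ‖s‖ = ‖s - s₀ + s₀‖ := by ring_nf
        _ ≤ ‖s - s₀‖ + ‖s₀‖ := norm_add_le _ _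
        _ ≤ R := by rw [hRdef]; linarith
    have hre : |s.re| ≤ R := le_trans (Complex.abs_re_le_norm s) hsabs
    have him : |s.im| ≤ R := le_trans (Complex.abs_im_le_norm s) hsabs
    rw [Complex.norm_cpow_of_ne_zero (hz0 ω)]
    have hexp : (Real.exp (Complex.arg (z ω) * (-s).im))⁻¹ ≤ Real.exp (Real.pi * R) := by
      rw [← Real.exp_neg]
      apply Real.exp_le_exp.2
      have h1 : |Complex.arg (z ω) * (-s).im| ≤ Real.pi * R := by
        rw [abs_mul]
        have := Complex.abs_arg_le_pi (z ω)
        have h2 : |(-s).im| = |s.im| := by simp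
        rw [h2]
        exact mul_le_mul this him (abs_nonneg _) Real.pi_nonneg
      have := (abs_le.mp h1).1
      linarith
    have hrpow : ‖z ω‖ ^ (-s).re ≤ (|c| + |X ω|) ^ n + K := by
      apply key_rpow ω
      simpa using hre
    rw [div_eq_mul_inv]
    have h0 : (0:ℝ) ≤ ‖z ω‖ ^ (-s).re := Real.rpow_nonneg (le_of_lt (hzpos ω)) _
    exact mul_le_mul hrpow hexp (by positivity) (by positivity)
  -- the functions
  set F : ℂ → Ω → ℂ := fun s ω => z ω ^ (-s) with hFdef
  set F' : ℂ → Ω → ℂ := fun s ω => z ω ^ (-s) * Complex.log (z ω) * (-1) with hF'def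
  -- measurability
  have hzmeas : Measurable z := by
    apply Measurable.add measurable_const
    exact (Complex.measurable_ofReal.comp hX).mul_const I
  have hFmeas : ∀ s : ℂ, AEStronglyMeasurable (F s) μ := by
    intro s
    have : F s = fun ω => Complex.exp (Complex.log (z ω) * (-s)) := by
      funext ω
      simp only [hFdef]
      rw [Complex.cpow_def_of_ne_zero (hz0 ω)]
    rw [this]
    exact ((Complex.measurable_log.comp hzmeas).mul_const (-s)).cexp.aestronglyMeasurable
  have hF'meas : AEStronglyMeasurable (F' s₀) μ := by
    have h1 : F' s₀ = fun ω =>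
        Complex.exp (Complex.log (z ω) * (-s₀)) * Complex.log (z ω) * (-1) := by
      funext ω
      simp only [hF'def]
      rw [Complex.cpow_def_of_ne_zero (hz0 ω)]
    rw [h1]
    exact ((((Complex.measurable_log.comp hzmeas).mul_const
      (-s₀)).cexp.mul (Complex.measurable_log.comp hzmeas)).mul_const
      (-1)).aestronglyMeasurable
  -- integrable bound
  set bound : Ω → ℝ := fun ω => 2 * Real.exp (Real.pi * R) * (A + |X ω|) ^ (n + 1)
    with hbdef
  have hbound_int : Integrable bound μ := by
    apply Integrable.const_mul
    exact integrable_poly_aux μ X hX hmom A (n + 1)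
  -- inner bound combination
  have hcomb : ∀ ω, ((|c| + |X ω|) ^ n + K) ≤ 2 * (A + |X ω|) ^ n := by
    intro ω
    have h1 : (|c| + |X ω|) ^ n ≤ (A + |X ω|) ^ n := by
      apply pow_le_pow_left₀ (by positivity)
      have : |c| ≤ A := by
        have h2 : (0:ℝ) < |c|⁻¹ := inv_pos.2 hc0
        have h3 : (0:ℝ) < m⁻¹ := inv_pos.2 hm0
        simp only [hAdef]
        nlinarith [Real.pi_pos]
      linarith
    have h2 : K ≤ (A + |X ω|) ^ n := by
      rw [hKdef]
      apply pow_le_pow_left₀ (by positivity)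
      have : m⁻¹ ≤ A := by
        have h2 : (0:ℝ) < |c|⁻¹ := inv_pos.2 hc0
        simp only [hAdef]
        nlinarith [Real.pi_pos, abs_nonneg c]
      linarith [abs_nonneg (X ω)]
    linarith
  -- the norm bound on F'
  have h_bound : ∀ᵐ ω ∂μ, ∀ s ∈ Metric.ball s₀ 1, ‖F' s ω‖ ≤ bound ω := by
    filter_upwards with ω s hs
    have h1 : ‖F' s ω‖ = ‖z ω ^ (-s)‖ * ‖Complex.log (z ω)‖ := by
      simp only [hF'def]
      rw [norm_mul, norm_mul]
      simp
    rw [h1]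
    have h2 := key_cpow ω s hs
    have h3 := key_log ω
    have h4 : |c| + |X ω| + |c|⁻¹ + Real.pi ≤ A + |X ω| := by
      have h5 : (0:ℝ) < m⁻¹ := inv_pos.2 hm0
      simp only [hAdef]
      nlinarith
    calc ‖z ω ^ (-s)‖ * ‖Complex.log (z ω)‖
        ≤ (((|c| + |X ω|) ^ n + K) * Real.exp (Real.pi * R)) * (A + |X ω|) := by
          apply mul_le_mul h2 (h3.trans h4) (by positivity) (by positivity)
      _ ≤ ((2 * (A + |X ω|) ^ n) * Real.exp (Real.pi * R)) * (A + |X ω|) := by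
          gcongr
          exact hcomb ω
      _ = bound ω := by
          simp only [hbdef]
          ring
  -- integrability of F s₀
  have hF_int : Integrable (F s₀) μ := by
    have hint2 : Integrable (fun ω => 2 * Real.exp (Real.pi * R) * (A + |X ω|) ^ n) μ :=
      (integrable_poly_aux μ X hX hmom A n).const_mul _
    refine hint2.mono' (hFmeas s₀) ?_
    filter_upwards with ω
    have h2 := key_cpow ω s₀ (Metric.mem_ball_self one_pos)
    have h3 := hcomb ω
    have h4 : ‖F s₀ ω‖ = ‖z ω ^ (-s₀)‖ := rfl
    rw [h4]
    calc ‖z ω ^ (-s₀)‖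
        ≤ ((|c| + |X ω|) ^ n + K) * Real.exp (Real.pi * R) := h2
      _ ≤ (2 * (A + |X ω|) ^ n) * Real.exp (Real.pi * R) := by
          gcongr
      _ = 2 * Real.exp (Real.pi * R) * (A + |X ω|) ^ n := by ring
  -- derivative
  have h_diff : ∀ᵐ ω ∂μ, ∀ s ∈ Metric.ball s₀ 1, HasDerivAt (F · ω) (F' s ω) s := by
    filter_upwards with ω s _
    have h1 : HasDerivAt (fun s : ℂ => -s) (-1 : ℂ) s := (hasDerivAt_id s).neg
    have h2 := h1.const_cpow (c := z ω) (Or.inl (hz0 ω))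
    exact h2
  have := hasDerivAt_integral_of_dominated_loc_of_deriv_le (Metric.ball_mem_nhds s₀ one_pos)
    (Filter.Eventually.of_forall hFmeas) hF_int hF'meas h_bound hbound_int h_diff
  exact this.2.differentiableAt
end

section
/- Let m ≥ 2, let f : [0,1] → ℝ be measurable, and s₁,…,s_{m-1} > 0. Then ∫_{A} f(t₁+⋯+t_{m-1}) t₁^{s₁-1}⋯t_{m-1}^{s_{m-1}-1} dt = (Γ(s₁)⋯Γ(s_{m-1})/Γ(s₁+⋯+s_{m-1})) ∫₀¹ f(t) t^{s₁+⋯+s_{m-1}-1} dt, over the simplex A = {t_j ≥ 0, t₁+⋯+t_{m-1} ≤ 1}, provided the right-hand single integral exists (is integrable). -/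
open MeasureTheory

section LiouvilleAux
open Set ENNReal

lemma betaC {a b : ℝ} (ha : 0 < a) (hb : 0 < b) :
    IntegrableOn (fun x : ℝ => ((x ^ (a-1) * (1-x) ^ (b-1) : ℝ) : ℂ)) (Set.Ioc 0 1) ∧
    ∫ x in Set.Ioc (0:ℝ) 1, ((x ^ (a-1) * (1-x) ^ (b-1) : ℝ) : ℂ)
      = Complex.betaIntegral a b := by
  have hF : IntegrableOn (fun x : ℝ => (x:ℂ) ^ ((a:ℂ)-1) * (1-(x:ℂ)) ^ ((b:ℂ)-1))
      (Set.Ioc 0 1) := by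
    have := Complex.betaIntegral_convergent (u := a) (v := b) (by simpa) (by simpa)
    rwa [intervalIntegrable_iff_integrableOn_Ioc_of_le (by norm_num)] at this
  have heq : EqOn (fun x : ℝ => (x:ℂ) ^ ((a:ℂ)-1) * (1-(x:ℂ)) ^ ((b:ℂ)-1))
      (fun x : ℝ => ((x ^ (a-1) * (1-x) ^ (b-1) : ℝ) : ℂ)) (Set.Ioc 0 1) := by
    intro x hx
    have h1 : (0:ℝ) ≤ x := le_of_lt hx.1
    have h2 : (0:ℝ) ≤ 1 - x := by linarith [hx.2]
    simp only [Complex.ofReal_mul]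
    rw [Complex.ofReal_cpow h1, Complex.ofReal_cpow h2]
    push_cast
    ring_nf
  constructor
  · exact (hF.congr_fun heq measurableSet_Ioc)
  · rw [← setIntegral_congr_fun measurableSet_Ioc heq]
    rw [Complex.betaIntegral, intervalIntegral.integral_of_le (by norm_num)]

lemma betaReal_integrableOn {a b : ℝ} (ha : 0 < a) (hb : 0 < b) :
    IntegrableOn (fun x : ℝ => x ^ (a-1) * (1-x) ^ (b-1)) (Set.Ioc 0 1) := by
  have h := (betaC ha hb).1
  have := h.re
  exact this.congr (ae_of_all _ (fun x => by simp))

lemma betaReal_eq {a b : ℝ} (ha : 0 < a) (hb : 0 < b) :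
    ∫ x in Set.Ioc (0:ℝ) 1, x ^ (a-1) * (1-x) ^ (b-1)
      = Real.Gamma a * Real.Gamma b / Real.Gamma (a+b) := by
  have h := (betaC ha hb).2
  have hcast : ∫ x in Set.Ioc (0:ℝ) 1, ((x ^ (a-1) * (1-x) ^ (b-1) : ℝ) : ℂ)
      = ((∫ x in Set.Ioc (0:ℝ) 1, x ^ (a-1) * (1-x) ^ (b-1) : ℝ) : ℂ) := integral_ofReal
  rw [hcast] at h
  have hG : Complex.Gamma (a:ℂ) * Complex.Gamma (b:ℂ)
      = Complex.Gamma ((a:ℂ)+(b:ℂ)) * Complex.betaIntegral a b :=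
    Complex.Gamma_mul_Gamma_eq_betaIntegral (by simpa) (by simpa)
  have hab : (0:ℝ) < a + b := by linarith
  have hΓ : Real.Gamma (a+b) ≠ 0 := (Real.Gamma_pos_of_pos hab).ne'
  have h4 : Complex.Gamma ((a:ℂ)+(b:ℂ)) = (Real.Gamma (a+b) : ℂ) := by
    rw [show ((a:ℂ)+(b:ℂ)) = ((a+b:ℝ):ℂ) by push_cast; ring, Complex.Gamma_ofReal]
  have h5 : Complex.Gamma ((a:ℂ)+(b:ℂ)) ≠ 0 := by
    rw [h4]; exact_mod_cast hΓ
  have hbeta : Complex.betaIntegral a b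
      = ((Real.Gamma a * Real.Gamma b / Real.Gamma (a+b) : ℝ) : ℂ) := by
    have : Complex.betaIntegral a b
        = Complex.Gamma a * Complex.Gamma b / Complex.Gamma ((a:ℂ)+(b:ℂ)) := by
      rw [hG]; field_simp
    rw [this, Complex.Gamma_ofReal, Complex.Gamma_ofReal, h4]
    push_cast
    ring
  rw [hbeta] at h
  exact_mod_cast h

lemma beta_lintegral {a b : ℝ} (ha : 0 < a) (hb : 0 < b) :
    ∫⁻ u in Ioo (0:ℝ) 1, ENNReal.ofReal (u^(a-1) * (1-u)^(b-1))
      = ENNReal.ofReal (Real.Gamma a * Real.Gamma b / Real.Gamma (a+b)) := by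
  have hInt : IntegrableOn (fun x : ℝ => x ^ (a-1) * (1-x) ^ (b-1)) (Set.Ioo 0 1) :=
    (betaReal_integrableOn ha hb).mono_set Ioo_subset_Ioc_self
  rw [← ofReal_integral_eq_lintegral_ofReal hInt ?_]
  · congr 1
    rw [← integral_Ioc_eq_integral_Ioo]
    exact betaReal_eq ha hb
  · filter_upwards [ae_restrict_mem measurableSet_Ioo] with u hu
    have h1 : (0:ℝ) ≤ u ^ (a-1) := Real.rpow_nonneg hu.1.le _
    have h2 : (0:ℝ) ≤ (1-u) ^ (b-1) := Real.rpow_nonneg (by linarith [hu.2]) _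
    positivity

lemma conv_lintegral {a b t : ℝ} (ha : 0 < a) (hb : 0 < b) (ht : 0 < t) :
    ∫⁻ v in Ioo (0:ℝ) t, ENNReal.ofReal (v^(a-1) * (t-v)^(b-1))
      = ENNReal.ofReal (t^(a+b-1)) *
        ENNReal.ofReal (Real.Gamma a * Real.Gamma b / Real.Gamma (a+b)) := by
  have hmeas : Measurable fun v : ℝ => ENNReal.ofReal (v^(a-1) * (t-v)^(b-1)) := by
    fun_prop
  have hmap : Measure.map (fun x : ℝ => t * x) volume = ENNReal.ofReal |t⁻¹| • volume :=
    Real.map_volume_mul_left ht.ne'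
  have hvol : (volume : Measure ℝ)
      = ENNReal.ofReal t • Measure.map (fun x : ℝ => t * x) volume := by
    rw [hmap, smul_smul, abs_of_pos (inv_pos.mpr ht), ← ENNReal.ofReal_mul ht.le,
      mul_inv_cancel₀ ht.ne', ENNReal.ofReal_one, one_smul]
  calc ∫⁻ v in Ioo (0:ℝ) t, ENNReal.ofReal (v^(a-1) * (t-v)^(b-1))
      = ENNReal.ofReal t * ∫⁻ v in Ioo (0:ℝ) t, ENNReal.ofReal (v^(a-1) * (t-v)^(b-1))
          ∂(Measure.map (fun x : ℝ => t * x) volume) := by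
        conv_lhs => rw [hvol]
        rw [Measure.restrict_smul, lintegral_smul_measure, smul_eq_mul]
    _ = ENNReal.ofReal t * ∫⁻ x in (fun x : ℝ => t * x) ⁻¹' Ioo (0:ℝ) t,
          ENNReal.ofReal ((t*x)^(a-1) * (t-t*x)^(b-1)) := by
        rw [setLIntegral_map measurableSet_Ioo hmeas (measurable_const_mul t)]
    _ = ENNReal.ofReal t * ∫⁻ x in Ioo (0:ℝ) 1,
          ENNReal.ofReal ((t*x)^(a-1) * (t-t*x)^(b-1)) := by
        have hpre : (fun x : ℝ => t * x) ⁻¹' Ioo (0:ℝ) t = Ioo (0:ℝ) 1 := by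
          ext x
          simp only [mem_preimage, mem_Ioo]
          constructor
          · rintro ⟨h1, h2⟩
            constructor
            · nlinarith
            · nlinarith
          · rintro ⟨h1, h2⟩
            exact ⟨by positivity, by nlinarith⟩
        rw [hpre]
    _ = ENNReal.ofReal t * ∫⁻ x in Ioo (0:ℝ) 1,
          ENNReal.ofReal (t^(a-1) * t^(b-1)) * ENNReal.ofReal (x^(a-1) * (1-x)^(b-1)) := by
        congr 1
        refine setLIntegral_congr_fun measurableSet_Ioo (fun x hx => ?_)
        have hx0 : (0:ℝ) ≤ x := hx.1.le
        have hx1 : (0:ℝ) ≤ 1 - x := by linarith [hx.2]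
        rw [show t - t*x = t * (1-x) by ring, Real.mul_rpow ht.le hx0,
          Real.mul_rpow ht.le hx1, ← ENNReal.ofReal_mul (by positivity)]
        ring_nf
    _ = ENNReal.ofReal (t^(a+b-1)) *
          ENNReal.ofReal (Real.Gamma a * Real.Gamma b / Real.Gamma (a+b)) := by
        rw [lintegral_const_mul' _ _ ENNReal.ofReal_ne_top, beta_lintegral ha hb,
          ← mul_assoc, ← ENNReal.ofReal_mul ht.le]
        congr 2
        rw [← Real.rpow_add ht]
        nth_rewrite 1 [← Real.rpow_one t]
        rw [← Real.rpow_add ht]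
        ring_nf

lemma beta_step (f : ℝ → ℝ≥0∞) (hf : Measurable f) {a b : ℝ} (ha : 0 < a) (hb : 0 < b) :
    ∫⁻ v in Ioc (0:ℝ) 1,
        (∫⁻ x in Ioc (0:ℝ) (1 - v), f (v + x) * ENNReal.ofReal (x^(b-1)))
          * ENNReal.ofReal (v^(a-1))
      = ENNReal.ofReal (Real.Gamma a * Real.Gamma b / Real.Gamma (a+b)) *
        ∫⁻ t in Ioc (0:ℝ) 1, f t * ENNReal.ofReal (t^(a+b-1)) := by
  set B := ENNReal.ofReal (Real.Gamma a * Real.Gamma b / Real.Gamma (a+b)) with hB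
  -- step 1 : shift the inner integral
  have step1 : ∀ v : ℝ,
      ∫⁻ x in Ioc (0:ℝ) (1 - v), f (v + x) * ENNReal.ofReal (x^(b-1))
        = ∫⁻ t in Ioc v 1, f t * ENNReal.ofReal ((t - v)^(b-1)) := by
    intro v
    have hmp : MeasurePreserving (fun x : ℝ => v + x) volume volume :=
      measurePreserving_add_left volume v
    have hemb : MeasurableEmbedding (fun x : ℝ => v + x) :=
      (Homeomorph.addLeft v).measurableEmbedding
    have := hmp.setLIntegral_comp_emb hemb
      (fun t => f t * ENNReal.ofReal ((t - v)^(b-1))) (Ioc (0:ℝ) (1 - v))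
    rw [show (fun x : ℝ => v + x) '' Ioc (0:ℝ) (1 - v) = Ioc v 1 by
        rw [image_const_add_Ioc]; norm_num] at this
    rw [← this]
    refine setLIntegral_congr_fun measurableSet_Ioc (fun x _ => ?_)
    simp [add_sub_cancel_left]
  -- the product-space integrand
  set S2 : Set (ℝ × ℝ) := {p | 0 < p.1 ∧ p.1 < p.2 ∧ p.2 ≤ 1} with hS2
  have mS2 : MeasurableSet S2 := by
    have h1 : S2 = ({p : ℝ × ℝ | 0 < p.1} ∩ {p | p.1 < p.2} ∩ {p | p.2 ≤ 1}) := by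
      ext p; simp [hS2, and_assoc]
    rw [h1]
    exact ((measurableSet_lt measurable_const measurable_fst).inter
      (measurableSet_lt measurable_fst measurable_snd)).inter
      (measurableSet_le measurable_snd measurable_const)
  set H : ℝ × ℝ → ℝ≥0∞ := S2.indicator
    (fun p => f p.2 * ENNReal.ofReal ((p.2 - p.1)^(b-1)) * ENNReal.ofReal (p.1^(a-1)))
    with hH
  have mH : Measurable H := by
    refine Measurable.indicator ?_ mS2
    fun_prop
  have key1 : ∫⁻ v in Ioc (0:ℝ) 1,
      (∫⁻ x in Ioc (0:ℝ) (1 - v), f (v + x) * ENNReal.ofReal (x^(b-1)))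
        * ENNReal.ofReal (v^(a-1))
      = ∫⁻ v, ∫⁻ t, H (v, t) := by
    rw [← lintegral_indicator measurableSet_Ioc]
    congr 1
    ext v
    by_cases hv : v ∈ Ioc (0:ℝ) 1
    · rw [indicator_of_mem hv, step1 v,
        ← lintegral_mul_const' _ _ ENNReal.ofReal_ne_top,
        ← lintegral_indicator measurableSet_Ioc]
      congr 1
      ext t
      by_cases htv : t ∈ Ioc v 1
      · rw [indicator_of_mem htv, hH,
          indicator_of_mem (show (v, t) ∈ S2 from ⟨hv.1, htv.1, htv.2⟩)]
      · rw [indicator_of_notMem htv, hH, indicator_of_notMem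
          (by intro hmem; exact htv ⟨hmem.2.1, hmem.2.2⟩)]
    · rw [indicator_of_notMem hv]
      symm
      have hz : ∀ t, H (v, t) = 0 := fun t =>
        indicator_of_notMem (fun hmem =>
          hv ⟨hmem.1, le_of_lt (lt_of_lt_of_le hmem.2.1 hmem.2.2)⟩) _
      simp [hz]
  have swap : ∫⁻ v, ∫⁻ t, H (v, t) = ∫⁻ t, ∫⁻ v, H (v, t) :=
    lintegral_lintegral_swap mH.aemeasurable
  have key2 : ∀ t : ℝ, ∫⁻ v, H (v, t)
      = (Ioc (0:ℝ) 1).indicator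
          (fun t => f t * (ENNReal.ofReal (t^(a+b-1)) * B)) t := by
    intro t
    by_cases ht : t ∈ Ioc (0:ℝ) 1
    · rw [indicator_of_mem ht]
      have hfib : ∀ v, H (v, t) = (Ioo (0:ℝ) t).indicator
          (fun v => f t * (ENNReal.ofReal (v^(a-1) * (t - v)^(b-1)))) v := by
        intro v
        by_cases hvm : v ∈ Ioo (0:ℝ) t
        · rw [indicator_of_mem hvm, hH, indicator_of_mem
            (show (v, t) ∈ S2 from ⟨hvm.1, hvm.2, ht.2⟩)]
          rw [ENNReal.ofReal_mul (Real.rpow_nonneg hvm.1.le _)]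
          ring
        · rw [indicator_of_notMem hvm, hH, indicator_of_notMem
            (fun hmem => hvm ⟨hmem.1, hmem.2.1⟩)]
      simp_rw [hfib]
      rw [lintegral_indicator measurableSet_Ioo,
        lintegral_const_mul _ (by fun_prop), conv_lintegral ha hb ht.1]
    · rw [indicator_of_notMem ht]
      have hz : ∀ v, H (v, t) = 0 := fun v =>
        indicator_of_notMem (fun hmem =>
          ht ⟨lt_trans hmem.1 hmem.2.1, hmem.2.2⟩) _
      simp [hz]
  rw [key1, swap]
  simp_rw [key2]
  rw [lintegral_indicator measurableSet_Ioc]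
  simp_rw [← mul_assoc]
  rw [lintegral_mul_const' B _ ENNReal.ofReal_ne_top, mul_comm]

lemma mSimplex (k : ℕ) :
    MeasurableSet {t : Fin k → ℝ | (∀ j, 0 ≤ t j) ∧ (∑ j, t j) ≤ 1} := by
  have h1 : {t : Fin k → ℝ | (∀ j, 0 ≤ t j) ∧ (∑ j, t j) ≤ 1}
      = (⋂ j, {t : Fin k → ℝ | 0 ≤ t j}) ∩ {t | (∑ j, t j) ≤ 1} := by
    ext t; simp [forall_and]
  rw [h1]
  exact (MeasurableSet.iInter fun j =>
      measurableSet_le measurable_const (measurable_pi_apply j)).inter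
    (measurableSet_le (Finset.measurable_sum _ fun j _ => measurable_pi_apply j)
      measurable_const)

lemma mIntegrand {k : ℕ} (f : ℝ → ℝ≥0∞) (hf : Measurable f) (s : Fin k → ℝ) :
    Measurable fun t : Fin k → ℝ =>
      f (∑ j, t j) * ∏ j, ENNReal.ofReal ((t j) ^ (s j - 1)) := by
  refine Measurable.mul
    (hf.comp (Finset.measurable_sum _ fun j _ => measurable_pi_apply j))
    (Finset.measurable_prod _ fun j _ => ?_)
  have : Measurable fun t : Fin k → ℝ => t j := measurable_pi_apply j
  fun_prop

lemma liouville_aux : ∀ (n : ℕ) (f : ℝ → ℝ≥0∞), Measurable f →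
    ∀ (s : Fin (n+1) → ℝ), (∀ j, 0 < s j) →
    ∫⁻ t in {t : Fin (n+1) → ℝ | (∀ j, 0 ≤ t j) ∧ (∑ j, t j) ≤ 1},
        f (∑ j, t j) * ∏ j, ENNReal.ofReal ((t j) ^ (s j - 1))
      = ENNReal.ofReal ((∏ j, Real.Gamma (s j)) / Real.Gamma (∑ j, s j)) *
        ∫⁻ t in Set.Ioc (0:ℝ) 1, f t * ENNReal.ofReal (t ^ ((∑ j, s j) - 1)) := by
  intro n
  induction n with
  | zero =>
    intro f hf s hs
    have e := MeasurableEquiv.funUnique (Fin 1) ℝ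
    have hmp : MeasurePreserving (MeasurableEquiv.funUnique (Fin 1) ℝ) volume volume :=
      volume_preserving_funUnique (Fin 1) ℝ
    set F : (Fin 1 → ℝ) → ℝ≥0∞ :=
      {t : Fin 1 → ℝ | (∀ j, 0 ≤ t j) ∧ (∑ j, t j) ≤ 1}.indicator
        (fun t => f (∑ j, t j) * ∏ j, ENNReal.ofReal ((t j) ^ (s j - 1))) with hF
    have mF : Measurable F := (mIntegrand f hf s).indicator (mSimplex 1)
    have h0 : ∫⁻ t in {t : Fin 1 → ℝ | (∀ j, 0 ≤ t j) ∧ (∑ j, t j) ≤ 1},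
        f (∑ j, t j) * ∏ j, ENNReal.ofReal ((t j) ^ (s j - 1)) = ∫⁻ t, F t := by
      rw [hF, lintegral_indicator (mSimplex 1)]
    rw [h0, ← (MeasurePreserving.symm _ hmp).lintegral_comp mF]
    have h1 : ∀ x : ℝ, F ((MeasurableEquiv.funUnique (Fin 1) ℝ).symm x)
        = (Set.Icc (0:ℝ) 1).indicator
            (fun x => f x * ENNReal.ofReal (x ^ (s 0 - 1))) x := by
      intro x
      have hsymm : ((MeasurableEquiv.funUnique (Fin 1) ℝ).symm x : Fin 1 → ℝ)
          = fun _ => x := rfl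
      rw [hsymm, hF]
      by_cases hx : x ∈ Set.Icc (0:ℝ) 1
      · rw [indicator_of_mem hx, indicator_of_mem (by
          constructor
          · intro j; exact hx.1
          · simpa using hx.2)]
        simp [Fin.sum_univ_one, Fin.prod_univ_one]
      · rw [indicator_of_notMem hx, indicator_of_notMem (by
          intro hmem
          exact hx ⟨hmem.1 0, by simpa using hmem.2⟩)]
    simp_rw [h1]
    rw [lintegral_indicator measurableSet_Icc,
      setLIntegral_congr (Ioc_ae_eq_Icc (μ := volume) (a := (0:ℝ)) (b := 1)).symm]
    have hc : (∏ j, Real.Gamma (s j)) / Real.Gamma (∑ j, s j) = 1 := by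
      rw [Fin.prod_univ_one, Fin.sum_univ_one]
      exact div_self (Real.Gamma_pos_of_pos (hs 0)).ne'
    rw [hc, ENNReal.ofReal_one, one_mul]
    simp [Fin.sum_univ_one]
  | succ n ih =>
    intro f hf s hs
    set b := s 0 with hbdef
    set s' : Fin (n+1) → ℝ := fun j => s j.succ with hs'def
    have hs' : ∀ j, 0 < s' j := fun j => hs _
    set a := ∑ j, s' j with hadef
    have hapos : 0 < a := Finset.sum_pos (fun j _ => hs' j) Finset.univ_nonempty
    have hbpos : 0 < b := hs 0
    set e := MeasurableEquiv.piFinSuccAbove (fun _ : Fin (n+2) => ℝ) 0 with he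
    have hmp : MeasurePreserving e volume volume :=
      volume_preserving_piFinSuccAbove (fun _ : Fin (n+2) => ℝ) 0
    set F : (Fin (n+2) → ℝ) → ℝ≥0∞ :=
      {t : Fin (n+2) → ℝ | (∀ j, 0 ≤ t j) ∧ (∑ j, t j) ≤ 1}.indicator
        (fun t => f (∑ j, t j) * ∏ j, ENNReal.ofReal ((t j) ^ (s j - 1))) with hF
    have mF : Measurable F := (mIntegrand f hf s).indicator (mSimplex (n+2))
    have hcons : ∀ p : ℝ × (Fin (n+1) → ℝ),
        (e.symm p : Fin (n+2) → ℝ) = Fin.cons p.1 p.2 := by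
      intro p
      rw [he]
      exact Fin.insertNth_zero' p.1 p.2
    have h0 : ∫⁻ t in {t : Fin (n+2) → ℝ | (∀ j, 0 ≤ t j) ∧ (∑ j, t j) ≤ 1},
        f (∑ j, t j) * ∏ j, ENNReal.ofReal ((t j) ^ (s j - 1)) = ∫⁻ t, F t := by
      rw [hF, lintegral_indicator (mSimplex (n+2))]
    rw [h0, ← (MeasurePreserving.symm _ hmp).lintegral_comp mF,
      Measure.volume_eq_prod,
      lintegral_prod_symm' (fun p => F (e.symm p)) (mF.comp e.symm.measurable)]
    -- the single-variable kernel g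
    set g : ℝ → ℝ≥0∞ :=
      fun v => ∫⁻ x in Ioc (0:ℝ) (1 - v), f (v + x) * ENNReal.ofReal (x ^ (b - 1))
      with hg
    have mg : Measurable g := by
      set J : ℝ × ℝ → ℝ≥0∞ := {q : ℝ × ℝ | 0 < q.2 ∧ q.2 ≤ 1 - q.1}.indicator
        (fun q => f (q.1 + q.2) * ENNReal.ofReal (q.2 ^ (b - 1))) with hJ
      have mJ : Measurable J := by
        refine Measurable.indicator (by fun_prop) ?_
        exact (measurableSet_lt measurable_const measurable_snd).inter
          (measurableSet_le measurable_snd (measurable_const.sub measurable_fst))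
      have hgJ : ∀ v, g v = ∫⁻ x, J (v, x) := by
        intro v
        simp only [hg]
        rw [← lintegral_indicator measurableSet_Ioc]
        congr 1
      rw [funext hgJ]
      exact Measurable.lintegral_prod_right mJ
    set W : (Fin (n+1) → ℝ) → ℝ≥0∞ :=
      fun y => ∏ j, ENNReal.ofReal ((y j) ^ (s' j - 1)) with hW
    have inner : ∀ y : Fin (n+1) → ℝ,
        ∫⁻ x, F (e.symm (x, y))
          = {y : Fin (n+1) → ℝ | (∀ j, 0 ≤ y j) ∧ (∑ j, y j) ≤ 1}.indicator
              (fun y => g (∑ j, y j) * W y) y := by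
      intro y
      by_cases hy : y ∈ {y : Fin (n+1) → ℝ | (∀ j, 0 ≤ y j) ∧ (∑ j, y j) ≤ 1}
      · rw [indicator_of_mem hy]
        have hptw : ∀ x : ℝ, F (e.symm (x, y))
            = (Icc (0:ℝ) (1 - ∑ j, y j)).indicator
                (fun x => f ((∑ j, y j) + x) * ENNReal.ofReal (x ^ (b - 1))) x
              * W y := by
          intro x
          rw [hcons, hF]
          have hsumc : ∑ j, Fin.cons (α := fun _ => ℝ) x y j = x + ∑ j, y j := by
            rw [Fin.sum_univ_succ]
            simp
          by_cases hx : x ∈ Icc (0:ℝ) (1 - ∑ j, y j)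
          · rw [indicator_of_mem hx, indicator_of_mem (by
              refine ⟨fun j => ?_, ?_⟩
              · refine Fin.cases ?_ ?_ j
                · simpa using hx.1
                · intro i; simpa using hy.1 i
              · rw [hsumc]
                have := hx.2
                linarith)]
            rw [hsumc, Fin.prod_univ_succ]
            simp only [Fin.cons_zero, Fin.cons_succ]
            rw [add_comm x (∑ j, y j), hW]
            ring
          · rw [indicator_of_notMem hx, indicator_of_notMem (by
              intro hmem
              refine hx ⟨?_, ?_⟩
              · simpa using hmem.1 0
              · have := hmem.2
                rw [hsumc] at this
                linarith), zero_mul]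
        simp_rw [hptw]
        rw [lintegral_mul_const _ (Measurable.indicator (by fun_prop) measurableSet_Icc),
          lintegral_indicator measurableSet_Icc,
          setLIntegral_congr (Ioc_ae_eq_Icc (μ := volume)
            (a := (0:ℝ)) (b := 1 - ∑ j, y j)).symm]
      · rw [indicator_of_notMem hy]
        have hz : ∀ x : ℝ, F (e.symm (x, y)) = 0 := by
          intro x
          rw [hcons, hF]
          refine indicator_of_notMem ?_ _
          intro hmem
          refine hy ⟨fun j => by simpa using hmem.1 j.succ, ?_⟩
          have hx0 : (0:ℝ) ≤ x := by simpa using hmem.1 0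
          have hsum := hmem.2
          rw [Fin.sum_univ_succ] at hsum
          simp only [Fin.cons_zero, Fin.cons_succ] at hsum
          linarith
        simp [hz]
    simp_rw [inner]
    rw [lintegral_indicator (mSimplex (n+1))]
    have hIH := ih g mg s' hs'
    simp only [hW]
    rw [hIH]
    have hbs : ∫⁻ v in Ioc (0:ℝ) 1, g v * ENNReal.ofReal (v ^ (a - 1))
        = ENNReal.ofReal (Real.Gamma a * Real.Gamma b / Real.Gamma (a+b)) *
            ∫⁻ t in Ioc (0:ℝ) 1, f t * ENNReal.ofReal (t ^ (a+b-1)) := by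
      simpa only [hg] using beta_step f hf hapos hbpos
    rw [hbs]
    have hsum2 : ∑ j : Fin (n+2), s j = b + a := by
      rw [Fin.sum_univ_succ, hadef, hs'def, hbdef]

    have hprod2 : (∏ j : Fin (n+2), Real.Gamma (s j))
        = Real.Gamma b * ∏ j, Real.Gamma (s' j) := by
      rw [Fin.prod_univ_succ, hs'def, hbdef]

    rw [hsum2, ← mul_assoc, ← ENNReal.ofReal_mul (div_nonneg
      (Finset.prod_nonneg fun j _ => (Real.Gamma_pos_of_pos (hs' j)).le)
      (Real.Gamma_pos_of_pos hapos).le)]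
    have hconst : (∏ j, Real.Gamma (s' j)) / Real.Gamma a *
        (Real.Gamma a * Real.Gamma b / Real.Gamma (a+b))
        = (∏ j : Fin (n+2), Real.Gamma (s j)) / Real.Gamma (b+a) := by
      rw [hprod2, add_comm b a]
      have h1 : Real.Gamma a ≠ 0 := (Real.Gamma_pos_of_pos hapos).ne'
      have h2 : Real.Gamma (a+b) ≠ 0 :=
        (Real.Gamma_pos_of_pos (by linarith)).ne'
      field_simp
    rw [hconst, show b + a - 1 = a + b - 1 by ring]

lemma liouville_real (n : ℕ) (f : ℝ → ℝ) (hf : Measurable f)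
    (s : Fin (n+1) → ℝ) (hs : ∀ j, 0 < s j)
    (hint : IntegrableOn (fun t : ℝ => f t * t ^ ((∑ j, s j) - 1)) (Set.Ioc 0 1)) :
    ∫ t : Fin (n+1) → ℝ in
        {t | (∀ j, 0 ≤ t j) ∧ (∑ j, t j) ≤ 1},
        f (∑ j, t j) * ∏ j, t j ^ (s j - 1)
      = ((∏ j, Real.Gamma (s j)) / Real.Gamma (∑ j, s j)) *
          ∫ t in Set.Ioc (0 : ℝ) 1, f t * t ^ ((∑ j, s j) - 1) := by
  have hσpos : 0 < ∑ j, s j := Finset.sum_pos (fun j _ => hs j) Finset.univ_nonempty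
  set σ := ∑ j, s j with hσ
  set C := (∏ j, Real.Gamma (s j)) / Real.Gamma σ with hCdef
  have hC0 : 0 ≤ C :=
    div_nonneg (Finset.prod_nonneg fun j _ => (Real.Gamma_pos_of_pos (hs j)).le)
      (Real.Gamma_pos_of_pos hσpos).le
  have mS := mSimplex (n+1)
  have mh : Measurable fun t : Fin (n+1) → ℝ =>
      f (∑ j, t j) * ∏ j, t j ^ (s j - 1) := by
    refine Measurable.mul
      (hf.comp (Finset.measurable_sum _ fun j _ => measurable_pi_apply j))
      (Finset.measurable_prod _ fun j _ => ?_)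
    have : Measurable fun t : Fin (n+1) → ℝ => t j := measurable_pi_apply j
    fun_prop
  have key : ∀ φ : ℝ → ℝ, Measurable φ →
      ∫⁻ t in {t : Fin (n+1) → ℝ | (∀ j, 0 ≤ t j) ∧ (∑ j, t j) ≤ 1},
          ENNReal.ofReal (φ (∑ j, t j) * ∏ j, t j ^ (s j - 1))
        = ENNReal.ofReal C *
            ∫⁻ t in Ioc (0:ℝ) 1, ENNReal.ofReal (φ t * t ^ (σ - 1)) := by
    intro φ mφ
    calc ∫⁻ t in {t : Fin (n+1) → ℝ | (∀ j, 0 ≤ t j) ∧ (∑ j, t j) ≤ 1},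
          ENNReal.ofReal (φ (∑ j, t j) * ∏ j, t j ^ (s j - 1))
        = ∫⁻ t in {t : Fin (n+1) → ℝ | (∀ j, 0 ≤ t j) ∧ (∑ j, t j) ≤ 1},
            (fun u => ENNReal.ofReal (φ u)) (∑ j, t j) *
              ∏ j, ENNReal.ofReal ((t j) ^ (s j - 1)) := by
          refine setLIntegral_congr_fun mS (fun t ht => ?_)
          rw [ENNReal.ofReal_mul'
              (Finset.prod_nonneg fun j _ => Real.rpow_nonneg (ht.1 j) _),
            ENNReal.ofReal_prod_of_nonneg (fun j _ => Real.rpow_nonneg (ht.1 j) _)]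
      _ = ENNReal.ofReal C *
            ∫⁻ t in Ioc (0:ℝ) 1,
              (fun u => ENNReal.ofReal (φ u)) t * ENNReal.ofReal (t ^ (σ - 1)) :=
          liouville_aux n (fun u => ENNReal.ofReal (φ u)) (mφ.ennreal_ofReal) s hs
      _ = ENNReal.ofReal C *
            ∫⁻ t in Ioc (0:ℝ) 1, ENNReal.ofReal (φ t * t ^ (σ - 1)) := by
          congr 1
          refine setLIntegral_congr_fun measurableSet_Ioc (fun t ht => ?_)
          rw [ENNReal.ofReal_mul' (Real.rpow_nonneg ht.1.le _)]
  -- integrability of the integrand on the simplex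
  have hIntS : IntegrableOn
      (fun t : Fin (n+1) → ℝ => f (∑ j, t j) * ∏ j, t j ^ (s j - 1))
      {t : Fin (n+1) → ℝ | (∀ j, 0 ≤ t j) ∧ (∑ j, t j) ≤ 1} := by
    refine ⟨mh.aestronglyMeasurable, ?_⟩
    rw [hasFiniteIntegral_iff_norm]
    have e1 : ∫⁻ t in {t : Fin (n+1) → ℝ | (∀ j, 0 ≤ t j) ∧ (∑ j, t j) ≤ 1},
        ENNReal.ofReal ‖f (∑ j, t j) * ∏ j, t j ^ (s j - 1)‖
        = ∫⁻ t in {t : Fin (n+1) → ℝ | (∀ j, 0 ≤ t j) ∧ (∑ j, t j) ≤ 1},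
            ENNReal.ofReal (|f (∑ j, t j)| * ∏ j, t j ^ (s j - 1)) := by
      refine setLIntegral_congr_fun mS (fun t ht => ?_)
      rw [Real.norm_eq_abs, abs_mul,
        abs_of_nonneg (Finset.prod_nonneg fun j _ => Real.rpow_nonneg (ht.1 j) _)]
    rw [e1, key (fun u => |f u|) hf.abs]
    refine ENNReal.mul_lt_top ENNReal.ofReal_lt_top ?_
    have e2 : ∫⁻ t in Ioc (0:ℝ) 1, ENNReal.ofReal (|f t| * t ^ (σ - 1))
        = ∫⁻ t in Ioc (0:ℝ) 1, ENNReal.ofReal ‖f t * t ^ (σ - 1)‖ := by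
      refine setLIntegral_congr_fun measurableSet_Ioc (fun t ht => ?_)
      rw [Real.norm_eq_abs, abs_mul, abs_of_nonneg (Real.rpow_nonneg ht.1.le _)]
    rw [e2]
    have := hint.2
    rwa [hasFiniteIntegral_iff_norm] at this
  -- final computation
  rw [integral_eq_lintegral_pos_part_sub_lintegral_neg_part hIntS,
    integral_eq_lintegral_pos_part_sub_lintegral_neg_part hint]
  have L1 : ∫⁻ a in {t : Fin (n+1) → ℝ | (∀ j, 0 ≤ t j) ∧ (∑ j, t j) ≤ 1},
      ENNReal.ofReal (f (∑ j, a j) * ∏ j, a j ^ (s j - 1))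
      = ENNReal.ofReal C *
          ∫⁻ t in Ioc (0:ℝ) 1, ENNReal.ofReal (f t * t ^ (σ - 1)) := key f hf
  have L2 : ∫⁻ a in {t : Fin (n+1) → ℝ | (∀ j, 0 ≤ t j) ∧ (∑ j, t j) ≤ 1},
      ENNReal.ofReal (-(f (∑ j, a j) * ∏ j, a j ^ (s j - 1)))
      = ENNReal.ofReal C *
          ∫⁻ t in Ioc (0:ℝ) 1, ENNReal.ofReal (-(f t * t ^ (σ - 1))) := by
    have := key (fun u => -f u) hf.neg
    simpa [neg_mul] using this
  rw [L1, L2, ENNReal.toReal_mul, ENNReal.toReal_mul, ENNReal.toReal_ofReal hC0,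
    ← mul_sub]

end LiouvilleAux

/-- Liouville's extension of the Dirichlet integral: for m ≥ 2, measurable f and
s₁,…,s_{m-1} > 0, the integral of f(t₁+⋯+t_{m-1}) t₁^{s₁-1}⋯t_{m-1}^{s_{m-1}-1}
over the simplex equals (∏ Γ(sⱼ)/Γ(∑ sⱼ)) ∫₀¹ f(t) t^{∑ sⱼ - 1} dt, provided the
single integral on the right exists. -/
theorem liouville_dirichlet (m : ℕ) (hm : 2 ≤ m)
    (f : ℝ → ℝ) (hf : Measurable f)
    (s : Fin (m - 1) → ℝ) (hs : ∀ j, 0 < s j)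
    (hint : IntegrableOn (fun t : ℝ => f t * t ^ ((∑ j, s j) - 1)) (Set.Ioc 0 1)) :
    ∫ t : Fin (m - 1) → ℝ in
        {t | (∀ j, 0 ≤ t j) ∧ (∑ j, t j) ≤ 1},
        f (∑ j, t j) * ∏ j, t j ^ (s j - 1)
      = ((∏ j, Real.Gamma (s j)) / Real.Gamma (∑ j, s j)) *
          ∫ t in Set.Ioc (0 : ℝ) 1, f t * t ^ ((∑ j, s j) - 1) := by
  obtain ⟨n, rfl⟩ : ∃ n, m = n + 2 := ⟨m - 2, by omega⟩
  exact liouville_real n f hf s hs hint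
end

section
/- The function f(x) = π/(4 cosh²(πx/2)) is a probability density on ℝ, and its characteristic function is θ/sinh(θ), i.e., ∫_ℝ e^{iθx} f(x) dx = θ/sinh θ for all real θ (with value 1 at θ = 0). -/
open MeasureTheory Real Set

noncomputable def sdcPhi (u : ℝ) : ℝ := (Real.log u - Real.log (1 - u)) / π

lemma sdc_deriv : ∀ u ∈ Ioo (0:ℝ) 1,
    HasDerivWithinAt sdcPhi (1 / (π * (u * (1 - u)))) (Ioo (0:ℝ) 1) u := by
  intro u hu
  obtain ⟨h0, h1⟩ := hu
  have h1' : 1 - u > 0 := by linarith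
  have hd : HasDerivAt sdcPhi ((1/u - 1/(1-u) * (-1)) / π) u := by
    have l1 : HasDerivAt Real.log (1/u) u := by
      simpa [one_div] using Real.hasDerivAt_log (ne_of_gt h0)
    have l2 : HasDerivAt (fun u : ℝ => Real.log (1 - u)) (1/(1-u) * (-1)) u := by
      have : HasDerivAt (fun u : ℝ => 1 - u) (-1) u := by
        exact (hasDerivAt_id u).const_sub (1:ℝ)
      rw [one_div]; exact (Real.hasDerivAt_log (ne_of_gt h1')).comp u this
    exact (l1.sub l2).div_const π
  have : (1/u - 1/(1-u) * (-1)) / π = 1 / (π * (u * (1 - u))) := by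
    field_simp; ring
  rw [this] at hd
  exact hd.hasDerivWithinAt

lemma sdc_inj : InjOn sdcPhi (Ioo (0:ℝ) 1) := by
  intro u hu v hv h
  obtain ⟨hu0, hu1⟩ := hu
  obtain ⟨hv0, hv1⟩ := hv
  have hu1' : (0:ℝ) < 1 - u := by linarith
  have hv1' : (0:ℝ) < 1 - v := by linarith
  have h2 : Real.log u - Real.log (1-u) = Real.log v - Real.log (1-v) := by
    have := Real.pi_ne_zero
    rw [sdcPhi, sdcPhi, div_left_inj' this] at h; linarith [h]
  have h3 : u / (1-u) = v / (1-v) := by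
    have := congrArg Real.exp h2
    rwa [Real.exp_sub, Real.exp_sub, Real.exp_log hu0, Real.exp_log hv0,
      Real.exp_log hu1', Real.exp_log hv1'] at this
  field_simp at h3
  nlinarith

lemma sdc_image : sdcPhi '' Ioo (0:ℝ) 1 = univ := by
  apply eq_univ_of_forall
  intro x
  set E := Real.exp (-(π * x)) with hEdef
  have hE : 0 < E := Real.exp_pos _
  refine ⟨1 / (1 + E), ⟨by positivity, ?_⟩, ?_⟩
  · rw [div_lt_one (by linarith)]; linarith
  · have h1 : 1 - 1/(1+E) = E/(1+E) := by field_simp; ring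
    have hne : (1:ℝ) + E ≠ 0 := by positivity
    rw [sdcPhi, h1, Real.log_div (ne_of_gt hE) hne, Real.log_div one_ne_zero hne,
      Real.log_one, Real.log_exp]
    have := Real.pi_ne_zero
    field_simp
    ring

lemma sdc_density : ∀ u ∈ Ioo (0:ℝ) 1,
    π / (4 * Real.cosh (π * sdcPhi u / 2) ^ 2) = π * (u * (1 - u)) := by
  intro u hu
  obtain ⟨h0, h1⟩ := hu
  have h1' : (0:ℝ) < 1 - u := by linarith
  have hpi := Real.pi_ne_zero
  have hy : π * sdcPhi u / 2 = (Real.log u - Real.log (1-u)) / 2 := by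
    rw [sdcPhi]; field_simp
  have hcosh2 : Real.cosh (2 * (π * sdcPhi u / 2)) = (u/(1-u) + (1-u)/u) / 2 := by
    rw [hy]
    have : 2 * ((Real.log u - Real.log (1-u)) / 2) = Real.log u - Real.log (1-u) := by ring
    rw [this, Real.cosh_eq, Real.exp_sub, Real.exp_log h0, Real.exp_log h1',
      neg_sub, Real.exp_sub, Real.exp_log h0, Real.exp_log h1']
  have hsq : Real.cosh (π * sdcPhi u / 2) ^ 2 = (Real.cosh (2 * (π * sdcPhi u / 2)) + 1) / 2 := by
    rw [Real.cosh_two_mul, Real.cosh_sq]; ring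
  rw [hsq, hcosh2]
  have hcl : ((u/(1-u) + (1-u)/u) / 2 + 1) / 2 = 1 / (4 * (u * (1-u))) := by
    field_simp; ring
  rw [hcl]
  field_simp

lemma sdc_key {E : Type*} [NormedAddCommGroup E] [NormedSpace ℝ E] (g : ℝ → E) :
    ∫ x : ℝ, g x = ∫ u in Ioo (0:ℝ) 1, |1 / (π * (u * (1 - u)))| • g (sdcPhi u) := by
  rw [← setIntegral_univ, ← sdc_image,
    integral_image_eq_integral_abs_deriv_smul measurableSet_Ioo sdc_deriv sdc_inj]

set_option maxHeartbeats 2000000 in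
/-- f(x) = π/(4 cosh²(πx/2)) is a probability density on ℝ with characteristic
function θ/sinh θ (value 1 at θ = 0). -/
theorem sinh_density_char :
    (∀ x : ℝ, 0 ≤ π / (4 * Real.cosh (π * x / 2) ^ 2)) ∧
    (∫ x : ℝ, π / (4 * Real.cosh (π * x / 2) ^ 2) = 1) ∧
    (∀ θ : ℝ, θ ≠ 0 →
      ∫ x : ℝ, Complex.exp (θ * x * Complex.I) * (π / (4 * Real.cosh (π * x / 2) ^ 2) : ℝ)
        = (θ : ℂ) / Real.sinh θ) := by
  refine ⟨fun x => by positivity, ?_, ?_⟩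
  · rw [sdc_key (fun x => π / (4 * Real.cosh (π * x / 2) ^ 2))]
    rw [setIntegral_congr_fun measurableSet_Ioo (g := fun _ => (1:ℝ)) ?_]
    · simp [Real.volume_Ioo]
    · intro u hu
      obtain ⟨h0, h1⟩ := hu
      have h1' : (0:ℝ) < 1 - u := by linarith
      simp only [smul_eq_mul, sdc_density u ⟨h0, h1⟩,
        abs_of_pos (by positivity : (0:ℝ) < 1 / (π * (u * (1-u))))]
      field_simp
  · intro θ hθ
    have hsinh : Real.sinh θ ≠ 0 := fun h => hθ (Real.sinh_injective (by rw [h, Real.sinh_zero]))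
    have hpiC : (π : ℂ) ≠ 0 := Complex.ofReal_ne_zero.mpr Real.pi_ne_zero
    set s : ℂ := ((θ / π : ℝ) : ℂ) * Complex.I with hs
    have hsne : s ≠ 0 := by
      simp [hs, Complex.I_ne_zero, div_eq_zero_iff, hθ, Real.pi_ne_zero, Complex.ofReal_eq_zero]
    have hsre : s.re = 0 := by simp [hs]
    have hInt : (∫ x : ℝ, Complex.exp (θ * x * Complex.I) *
        (π / (4 * Real.cosh (π * x / 2) ^ 2) : ℝ))
        = Complex.betaIntegral (1 + s) (1 - s) := by
      rw [sdc_key (fun x => Complex.exp (θ * x * Complex.I) *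
        ((π / (4 * Real.cosh (π * x / 2) ^ 2) : ℝ) : ℂ))]
      rw [Complex.betaIntegral, intervalIntegral.integral_of_le zero_le_one,
        integral_Ioc_eq_integral_Ioo]
      apply setIntegral_congr_fun measurableSet_Ioo
      intro u hu
      obtain ⟨h0, h1⟩ := hu
      have h1' : (0:ℝ) < 1 - u := by linarith
      have hpos : (0:ℝ) < π * (u * (1-u)) := by positivity
      simp only [sdc_density u ⟨h0, h1⟩, abs_of_pos (by positivity : (0:ℝ) < 1 / (π * (u * (1-u))))]
      rw [Complex.real_smul]
      have hexp : Complex.exp ((θ : ℂ) * (sdcPhi u : ℂ) * Complex.I)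
          = (u : ℂ) ^ ((1 + s) - 1) * (1 - (u : ℂ)) ^ ((1 - s) - 1) := by
        have e1 : ((1 + s) - 1 : ℂ) = s := by ring
        have e2 : ((1 - s) - 1 : ℂ) = -s := by ring
        rw [e1, e2, Complex.cpow_def_of_ne_zero (by exact_mod_cast ne_of_gt h0),
          show (1 - (u:ℂ)) = ((1 - u : ℝ) : ℂ) by push_cast; ring,
          Complex.cpow_def_of_ne_zero (by exact_mod_cast ne_of_gt h1'),
          ← Complex.ofReal_log h0.le, ← Complex.ofReal_log h1'.le, ← Complex.exp_add]
        congr 1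
        rw [hs, show ((sdcPhi u : ℝ) : ℂ) = (((Real.log u - Real.log (1-u)) / π : ℝ) : ℂ) from rfl]
        push_cast
        field_simp
        ring
      have cancel : ∀ (X : ℂ) (d : ℝ), d ≠ 0 → ((1/d : ℝ) : ℂ) * (X * (d:ℂ)) = X := by
        intro X d hd
        have hd' : (d : ℂ) ≠ 0 := Complex.ofReal_ne_zero.mpr hd
        push_cast
        field_simp
      rw [hexp]
      exact cancel _ _ (ne_of_gt hpos)
    rw [hInt]
    have hbeta : Complex.Gamma (1 + s) * Complex.Gamma (1 - s)
        = Complex.Gamma ((1 + s) + (1 - s)) * Complex.betaIntegral (1 + s) (1 - s) :=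
      Complex.Gamma_mul_Gamma_eq_betaIntegral (by simp [hsre]) (by simp [Complex.sub_re, hsre])
    have h2 : ((1 + s) + (1 - s) : ℂ) = 2 := by ring
    rw [h2, (show Complex.Gamma 2 = 1 by rw [show (2:ℂ) = 1 + 1 by norm_num, Complex.Gamma_add_one 1 one_ne_zero, Complex.Gamma_one, mul_one]), one_mul] at hbeta
    rw [← hbeta, show (1 + s : ℂ) = s + 1 by ring, Complex.Gamma_add_one s hsne, mul_assoc,
      Complex.Gamma_mul_Gamma_one_sub s]
    have hsin : Complex.sin ((π : ℂ) * s) = (Real.sinh θ : ℂ) * Complex.I := by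
      have : (π : ℂ) * s = (θ : ℂ) * Complex.I := by
        rw [hs]; push_cast; field_simp
      rw [this, Complex.sin_mul_I, Complex.ofReal_sinh]
    rw [hsin, hs]
    have hsinhC : (Real.sinh θ : ℂ) ≠ 0 := Complex.ofReal_ne_zero.mpr hsinh
    push_cast
    field_simp
end
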